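/- arXiv:0809.1363 — 3 statements merged into one kernel-verified Lean document; each statement's English description precedes it below -/
import Mathlib

section
/- Let $k$ be an algebraically closed field of characteristic $p>0$ and $A$ a finite-dimensional symmetric $k$-algebra with symmetrizing form $(\cdot,\cdot)$. Let $K(A)$ be the $k$-span of all commutators $[a,b]=ab-ba$, and for $n\ge 0$ let $T_n(A)=\{x\in A : x^{p^n}\in K(A)\}$ and $T_n^\perp(A)$ its orthogonal space. Then the spaces $T_n^\perp(A)$ form a decreasing chain of ideals of the center: $Z(A)=K(A)^\perp=T_0^\perp(A)\supseteq T_1^\perp(A)\supseteq T_2^\perp(A)\supseteq\cdots$. -/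
/-- The commutator subspace `K(A)`: the `k`-span of all commutators `a*b - b*a`. -/
def commutatorSpan (k A : Type*) [Field k] [Ring A] [Algebra k A] : Submodule k A :=
  Submodule.span k {x : A | ∃ a b : A, x = a * b - b * a}

/-- `T_n(A) = {x ∈ A | x^(p^n) ∈ K(A)}`. -/
def TnSet (k : Type*) {A : Type*} [Field k] [Ring A] [Algebra k A] (p n : ℕ) : Set A :=
  {x : A | x ^ p ^ n ∈ commutatorSpan k A}

/-- The orthogonal space of a subset with respect to a bilinear form. -/
def perpSet {k A : Type*} [Field k] [Ring A] [Algebra k A]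
    (B : A →ₗ[k] A →ₗ[k] k) (S : Set A) : Set A :=
  {x : A | ∀ y ∈ S, B x y = 0}

/-!
Rotating a word cyclically changes its product by a commutator `a * b - b * a`, so modulo `K(A)` the
product of a word only depends on its rotation orbit. Expanding `(x + y) ^ p` into words of length
`p`, the orbits of the non-constant words have `p` elements and cancel in characteristic `p`, so
`(x + y) ^ p ≡ x ^ p + y ^ p` modulo `K(A)`. Since also `(a * b) ^ p - (b * a) ^ p ∈ K(A)`, the
space `K(A)` is closed under `p`-th powers, whence `T_n(A) ⊆ T_{n+1}(A)`. On the orthogonal side,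
`(z, a * b - b * a) = (z * a - a * z, b)` gives `K(A)^⊥ = Z(A)` by non-degeneracy, and
`(z * x, y) = (x, z * y)` makes each `T_n^⊥(A)` stable under multiplication by `Z(A)`.
-/

open Finset MulAction Equiv

theorem sum_pow_eq_sum_prod_ofFn {R ι : Type*} [Semiring R] [Fintype ι] (f : ι → R) (n : ℕ) :
    (∑ i, f i) ^ n = ∑ w : Fin n → ι, (List.ofFn fun j => f (w j)).prod := by
  induction n with
  | zero => simp
  | succ n ih =>
    rw [pow_succ', ih, Finset.sum_mul_sum, ← (Fin.consEquiv fun _ => ι).sum_comp,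
      Fintype.sum_prod_type]
    simp [List.ofFn_succ]

theorem IsPGroup.sum_eq_sum_fixedPoints {p : ℕ} [Fact p.Prime] {G α M : Type*} [Group G]
    [MulAction G α] [Fintype α] [AddCommMonoid M] (hG : IsPGroup p G)
    (hM : ∀ m : M, p • m = 0) {F : α → M} (hF : ∀ (g : G) (a : α), F (g • a) = F a)
    [DecidablePred (· ∈ fixedPoints G α)] :
    ∑ a, F a = ∑ a with a ∈ fixedPoints G α, F a := by
  classical
  suffices hfree : ∑ a with a ∉ fixedPoints G α, F a = 0 by
    rw [← sum_filter_add_sum_filter_not univ (· ∈ fixedPoints G α), hfree, add_zero]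
  rw [← sum_fiberwise _ (Quotient.mk (orbitRel G α))]
  refine sum_eq_zero fun ω _ => ?_
  induction ω using Quotient.inductionOn with | h b => ?_
  have mem_orbit : ∀ {a}, (Quotient.mk _ a = Quotient.mk (orbitRel G α) b) ↔ a ∈ orbit G b :=
    Quotient.eq.trans orbitRel_apply
  by_cases hb : b ∈ fixedPoints G α
  · refine sum_eq_zero fun a ha => ?_
    simp only [mem_filter, mem_univ, true_and, mem_orbit] at ha
    exact absurd (mem_fixedPoints'.mp hb a ha.2 ▸ hb) ha.1
  · have hfiber : ({a | a ∉ fixedPoints G α} : Finset α).filter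
        (fun a => Quotient.mk _ a = Quotient.mk (orbitRel G α) b) = (orbit G b).toFinset := by
      ext a
      simp only [mem_filter, mem_univ, true_and, mem_orbit, Set.mem_toFinset]
      refine ⟨And.right, fun ha => ⟨fun hfix => hb ?_, ha⟩⟩
      rwa [mem_fixedPoints'.mp hfix b (mem_orbit_symm.mp ha)]
    have hconst : ∀ a ∈ (orbit G b).toFinset, F a = F b := by
      intro a ha
      obtain ⟨g, rfl⟩ := Set.mem_toFinset.mp ha
      exact hF g b
    obtain ⟨n, hn⟩ := hG.card_orbit b
    have hn0 : n ≠ 0 := by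
      rintro rfl
      refine hb (mem_fixedPoints_iff_card_orbit_eq_one.mpr ?_)
      simpa [Nat.card_eq_fintype_card] using hn
    rw [hfiber, sum_congr rfl hconst, sum_const, Set.toFinset_card, ← Nat.card_eq_fintype_card,
      hn, ← Nat.succ_pred_eq_of_ne_zero hn0, pow_succ, mul_nsmul, hM]

theorem Equiv.Perm.sum_eq_sum_fixed_of_pow_eq_one {p n : ℕ} [Fact p.Prime] {α M : Type*}
    [Fintype α] [AddCommMonoid M] {σ : Perm α} (hσ : σ ^ p ^ n = 1)
    (hM : ∀ m : M, p • m = 0) {F : α → M} (hF : ∀ a, F (σ a) = F a)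
    [DecidablePred fun a => σ a = a] :
    ∑ a, F a = ∑ a with σ a = a, F a := by
  classical
  have hG : IsPGroup p (Subgroup.zpowers σ) :=
    IsPGroup.of_card_dvd_pow ((Nat.card_zpowers σ).symm ▸ orderOf_dvd_of_pow_eq_one hσ)
  have hFzpow : ∀ (j : ℤ) (a : α), F ((σ ^ j) a) = F a := by
    intro j
    induction j using Int.induction_on with
    | zero => exact fun a => rfl
    | succ j ih => exact fun a => by rw [zpow_add_one, Perm.mul_apply, ih, hF]
    | pred j ih =>
      exact fun a => by
        rw [zpow_sub_one, Perm.mul_apply, ih, ← hF, Perm.coe_inv, apply_symm_apply]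
  have hfix : ∀ a, a ∈ fixedPoints (Subgroup.zpowers σ) α ↔ σ a = a := fun a =>
    ⟨fun h => h ⟨σ, Subgroup.mem_zpowers σ⟩,
      fun h ⟨_, j, hj⟩ => hj ▸ Perm.zpow_apply_eq_self_of_apply_eq_self h j⟩
  rw [hG.sum_eq_sum_fixedPoints hM fun ⟨_, j, hj⟩ a => hj ▸ hFzpow j a]
  simp only [hfix]

def cyclicShift (ι : Type*) (n : ℕ) : Perm (Fin (n + 1) → ι) :=
  (Equiv.addRight (1 : Fin (n + 1))).symm.arrowCongr (Equiv.refl ι)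

section cyclicShift

open Fin.NatCast

variable {ι : Type*} {n : ℕ}

@[simp]
theorem cyclicShift_apply (w : Fin (n + 1) → ι) (i : Fin (n + 1)) :
    cyclicShift ι n w i = w (i + 1) := rfl

theorem cyclicShift_pow_apply (j : ℕ) (w : Fin (n + 1) → ι) (i : Fin (n + 1)) :
    (cyclicShift ι n ^ j) w i = w (i + (j : Fin (n + 1))) := by
  induction j generalizing i with
  | zero => simp
  | succ j ih =>
    rw [pow_succ', Perm.mul_apply, cyclicShift_apply, ih, Nat.cast_succ, add_assoc, add_comm 1]

theorem cyclicShift_pow_card : cyclicShift ι n ^ (n + 1) = 1 := by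
  ext w i
  rw [cyclicShift_pow_apply, Fin.natCast_self, add_zero, Perm.one_apply]

theorem cyclicShift_eq_self_iff {w : Fin (n + 1) → ι} :
    cyclicShift ι n w = w ↔ ∃ c, Function.const _ c = w := by
  refine ⟨fun hw => ⟨w 0, funext fun i => ?_⟩, fun ⟨c, hc⟩ => hc ▸ rfl⟩
  have hpow : ∀ j : ℕ, w (j : Fin (n + 1)) = w 0 := fun j => by
    rw [← zero_add (j : Fin (n + 1)), ← cyclicShift_pow_apply j w,
      Perm.pow_apply_eq_self_of_apply_eq_self hw]
  rw [Function.const_apply, ← hpow i, Fin.cast_val_eq_self]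

end cyclicShift

section CommutatorSpan

variable {k A : Type*} [Field k] [Ring A] [Algebra k A]

theorem commutator_mem_commutatorSpan (a b : A) : a * b - b * a ∈ commutatorSpan k A :=
  Submodule.subset_span ⟨a, b, rfl⟩

theorem prod_ofFn_cyclicShift_sub_mem_commutatorSpan {n : ℕ} (g : Fin (n + 1) → A) :
    (List.ofFn (cyclicShift A n g)).prod - (List.ofFn g).prod ∈ commutatorSpan k A := by
  rw [List.ofFn_succ', List.ofFn_succ]
  simp only [cyclicShift_apply, Fin.coeSucc_eq_succ, Fin.last_add_one, List.concat_eq_append,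
    List.prod_append, List.prod_cons, List.prod_nil, mul_one]
  exact commutator_mem_commutatorSpan _ _

theorem sum_pow_char_sub_sum_pow_char_mem_commutatorSpan (p : ℕ) [Fact p.Prime] [CharP k p]
    {ι : Type*} [Fintype ι] (f : ι → A) :
    (∑ i, f i) ^ p - ∑ i, f i ^ p ∈ commutatorSpan k A := by
  classical
  obtain ⟨n, rfl⟩ := Nat.exists_eq_add_one_of_ne_zero (Fact.out : p.Prime).ne_zero
  set π := (commutatorSpan k A).mkQ
  have hquot : ∀ x : A ⧸ commutatorSpan k A, (n + 1) • x = 0 := fun x => by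
    rw [← Nat.cast_smul_eq_nsmul k, CharP.cast_eq_zero, zero_smul]
  have hshift : ∀ w : Fin (n + 1) → ι, π (List.ofFn fun j => f (cyclicShift ι n w j)).prod =
      π (List.ofFn fun j => f (w j)).prod := fun w =>
    (Submodule.Quotient.eq _).mpr (prod_ofFn_cyclicShift_sub_mem_commutatorSpan (f ∘ w))
  have hfixed : ({w | cyclicShift ι n w = w} : Finset (Fin (n + 1) → ι)) =
      univ.image (Function.const _) := by
    ext w
    simp only [mem_filter, mem_univ, true_and, mem_image, cyclicShift_eq_self_iff]
  rw [← Submodule.Quotient.eq]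
  calc π ((∑ i, f i) ^ (n + 1))
      = ∑ w : Fin (n + 1) → ι, π (List.ofFn fun j => f (w j)).prod := by
        rw [sum_pow_eq_sum_prod_ofFn, map_sum]
    _ = ∑ w with cyclicShift ι n w = w, π (List.ofFn fun j => f (w j)).prod :=
        Perm.sum_eq_sum_fixed_of_pow_eq_one (n := 1) (by rw [pow_one, cyclicShift_pow_card])
          hquot hshift
    _ = π (∑ i, f i ^ (n + 1)) := by
        rw [hfixed, sum_image (Function.const_injective.injOn), map_sum]
        simp [List.prod_replicate, pow_succ']

theorem add_pow_char_sub_mem_commutatorSpan (p : ℕ) [Fact p.Prime] [CharP k p] (x y : A) :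
    (x + y) ^ p - (x ^ p + y ^ p) ∈ commutatorSpan k A := by
  simpa using sum_pow_char_sub_sum_pow_char_mem_commutatorSpan (k := k) p (fun b => cond b x y)

theorem mul_pow_sub_mul_pow_mem_commutatorSpan (a b : A) (n : ℕ) :
    (a * b) ^ n - (b * a) ^ n ∈ commutatorSpan k A := by
  cases n with
  | zero => simp
  | succ n =>
    rw [pow_succ, ← mul_assoc, mul_pow_mul, pow_succ, ← mul_assoc, mul_assoc a]
    exact commutator_mem_commutatorSpan _ _

theorem pow_char_mem_commutatorSpan (p : ℕ) [Fact p.Prime] [CharP k p] {u : A}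
    (hu : u ∈ commutatorSpan k A) : u ^ p ∈ commutatorSpan k A := by
  induction hu using Submodule.span_induction with
  | mem u hu =>
    obtain ⟨a, b, rfl⟩ := hu
    -- `(-1) ^ p = -1` in characteristic `p`, so `(a * b - b * a) ^ p ≡ (a * b) ^ p - (b * a) ^ p`
    have hsplit := add_pow_char_sub_mem_commutatorSpan (k := k) p (a * b) ((-1 : k) • (b * a))
    rw [smul_pow, neg_one_pow_char k p] at hsplit
    simp only [neg_one_smul, ← sub_eq_add_neg] at hsplit
    simpa using add_mem hsplit (mul_pow_sub_mul_pow_mem_commutatorSpan a b p)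
  | zero => simp [(Fact.out : p.Prime).ne_zero]
  | add u v _ _ hu hv =>
    simpa using add_mem (add_pow_char_sub_mem_commutatorSpan p u v) (add_mem hu hv)
  | smul c u _ hu =>
    rw [smul_pow]
    exact Submodule.smul_mem _ _ hu

theorem mul_mem_commutatorSpan_of_mem_center {z u : A} (hz : z ∈ Set.center A)
    (hu : u ∈ commutatorSpan k A) : z * u ∈ commutatorSpan k A := by
  induction hu using Submodule.span_induction with
  | mem u hu =>
    obtain ⟨a, b, rfl⟩ := hu
    rw [mul_sub, ← mul_assoc, ← mul_assoc, ← Semigroup.mem_center_iff.mp hz b, mul_assoc b]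
    exact commutator_mem_commutatorSpan _ _
  | zero => simp
  | add u v _ _ hu hv => simpa [mul_add] using add_mem hu hv
  | smul c u _ hu => simpa [mul_smul_comm] using Submodule.smul_mem _ c hu

end CommutatorSpan

section TnSet

variable {k A : Type*} [Field k] [Ring A] [Algebra k A]

theorem mem_TnSet {p n : ℕ} {x : A} : x ∈ TnSet k p n ↔ x ^ p ^ n ∈ commutatorSpan k A :=
  Iff.rfl

theorem TnSet_zero (p : ℕ) : TnSet k p 0 = (commutatorSpan k A : Set A) := by
  ext x
  rw [mem_TnSet, pow_zero, pow_one, SetLike.mem_coe]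

theorem TnSet_subset_TnSet_succ (p : ℕ) [Fact p.Prime] [CharP k p] (n : ℕ) :
    (TnSet k p n : Set A) ⊆ TnSet k p (n + 1) := fun x hx => by
  rw [mem_TnSet, pow_succ, pow_mul]
  exact pow_char_mem_commutatorSpan p hx

theorem TnSet_monotone (p : ℕ) [Fact p.Prime] [CharP k p] :
    Monotone (TnSet k p : ℕ → Set A) :=
  monotone_nat_of_le_succ (TnSet_subset_TnSet_succ p)

theorem mul_mem_TnSet_of_mem_center {p n : ℕ} {z x : A} (hz : z ∈ Set.center A)
    (hx : x ∈ TnSet k p n) : z * x ∈ TnSet k p n := by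
  have hzx : Commute z x := (Semigroup.mem_center_iff.mp hz x).symm
  rw [mem_TnSet, hzx.mul_pow]
  exact mul_mem_commutatorSpan_of_mem_center ((Submonoid.center A).pow_mem hz _) hx

end TnSet

section perpSet

variable {k A : Type*} [Field k] [Ring A] [Algebra k A] (B : A →ₗ[k] A →ₗ[k] k)

theorem perpSet_anti {S T : Set A} (h : S ⊆ T) : perpSet B T ⊆ perpSet B S :=
  fun _ hx y hy => hx y (h hy)

theorem add_mem_perpSet {S : Set A} {x y : A} (hx : x ∈ perpSet B S) (hy : y ∈ perpSet B S) :
    x + y ∈ perpSet B S := fun w hw => by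
  rw [map_add, LinearMap.add_apply, hx w hw, hy w hw, add_zero]

theorem smul_mem_perpSet {S : Set A} (c : k) {x : A} (hx : x ∈ perpSet B S) :
    c • x ∈ perpSet B S := fun w hw => by
  rw [map_smul, LinearMap.smul_apply, hx w hw, smul_zero]

variable {B}

theorem mul_mem_perpSet_of_mem_center (hassoc : ∀ a b c : A, B (a * b) c = B a (b * c))
    {S : Set A} {z x : A} (hz : z ∈ Set.center A) (hS : ∀ y ∈ S, z * y ∈ S)
    (hx : x ∈ perpSet B S) : z * x ∈ perpSet B S := fun y hy => by
  rw [← Semigroup.mem_center_iff.mp hz x, hassoc]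
  exact hx _ (hS y hy)

theorem perpSet_commutatorSpan (hnondeg : ∀ x : A, (∀ y : A, B x y = 0) → x = 0)
    (hsymm : ∀ a b : A, B a b = B b a) (hassoc : ∀ a b c : A, B (a * b) c = B a (b * c)) :
    perpSet B (commutatorSpan k A : Set A) = Set.center A := by
  have hcomm : ∀ z a b : A, B z (a * b - b * a) = B (z * a - a * z) b := fun z a b => by
    rw [map_sub, map_sub, LinearMap.sub_apply, hassoc z a b, hsymm (a * z) b, ← hassoc b a z,
      hsymm (b * a) z]
  ext z
  refine ⟨fun hz => Semigroup.mem_center_iff.mpr fun a => ?_, fun hz y hy => ?_⟩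
  · refine (sub_eq_zero.mp (hnondeg _ fun b => ?_)).symm
    rw [← hcomm]
    exact hz _ (commutator_mem_commutatorSpan a b)
  · refine (Submodule.span_le (p := LinearMap.ker (B z)) |>.mpr ?_) hy
    rintro _ ⟨a, b, rfl⟩
    rw [SetLike.mem_coe, LinearMap.mem_ker, hcomm, ← Semigroup.mem_center_iff.mp hz a, sub_self,
      map_zero, LinearMap.zero_apply]

end perpSet

theorem kulshammer_chain_general
    {k A : Type*} [Field k] {p : ℕ} [hp : Fact p.Prime] [CharP k p]
    [Ring A] [Algebra k A]
    (B : A →ₗ[k] A →ₗ[k] k)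
    (hnondeg : ∀ x : A, (∀ y : A, B x y = 0) → x = 0)
    (hsymm : ∀ a b : A, B a b = B b a)
    (hassoc : ∀ a b c : A, B (a * b) c = B a (b * c)) :
    -- `Z(A) = K(A)^⊥`
    perpSet B (commutatorSpan k A : Set A) = Set.center A ∧
    -- `K(A)^⊥ = T_0^⊥(A)`
    perpSet B (commutatorSpan k A : Set A) = perpSet B (TnSet k p 0) ∧
    -- the chain is decreasing
    (∀ n : ℕ, perpSet B (TnSet k p (n + 1)) ⊆ perpSet B (TnSet k p n)) ∧
    -- each `T_n^⊥(A)` is an ideal of the center `Z(A)`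
    (∀ n : ℕ, perpSet B (TnSet k p n) ⊆ Set.center A) ∧
    (∀ n : ℕ, ∀ z ∈ Set.center A, ∀ x ∈ perpSet B (TnSet k p n), z * x ∈ perpSet B (TnSet k p n)) ∧
    (∀ n : ℕ, ∀ x ∈ perpSet B (TnSet k p n), ∀ y ∈ perpSet B (TnSet k p n),
      x + y ∈ perpSet B (TnSet k p n)) ∧
    (∀ n : ℕ, ∀ c : k, ∀ x ∈ perpSet B (TnSet k p n), c • x ∈ perpSet B (TnSet k p n)) := by
  have hcenter := perpSet_commutatorSpan hnondeg hsymm hassoc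
  have hzero : perpSet B (commutatorSpan k A : Set A) = perpSet B (TnSet k p 0) := by
    rw [TnSet_zero]
  refine ⟨hcenter, hzero, fun n => perpSet_anti B (TnSet_subset_TnSet_succ p n), fun n => ?_,
    fun n z hz x hx => mul_mem_perpSet_of_mem_center hassoc hz
      (fun y hy => mul_mem_TnSet_of_mem_center hz hy) hx,
    fun n x hx y hy => add_mem_perpSet B hx hy, fun n c x hx => smul_mem_perpSet B c hx⟩
  rw [← hcenter, hzero]
  exact perpSet_anti B (TnSet_monotone p (Nat.zero_le n))

/-- The Külshammer ideals `T_n^⊥(A)` of a finite-dimensional symmetric algebra over an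
algebraically closed field of characteristic `p > 0` form a decreasing chain of ideals of the
center, starting with `Z(A) = K(A)^⊥ = T_0^⊥(A)`. -/
theorem kulshammer_chain
    {k A : Type*} [Field k] [IsAlgClosed k] {p : ℕ} [hp : Fact p.Prime] [CharP k p]
    [Ring A] [Algebra k A] [FiniteDimensional k A]
    (B : A →ₗ[k] A →ₗ[k] k)
    (hnondeg : ∀ x : A, (∀ y : A, B x y = 0) → x = 0)
    (hsymm : ∀ a b : A, B a b = B b a)
    (hassoc : ∀ a b c : A, B (a * b) c = B a (b * c)) :
    -- `Z(A) = K(A)^⊥`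
    perpSet B (commutatorSpan k A : Set A) = Set.center A ∧
    -- `K(A)^⊥ = T_0^⊥(A)`
    perpSet B (commutatorSpan k A : Set A) = perpSet B (TnSet k p 0) ∧
    -- the chain is decreasing
    (∀ n : ℕ, perpSet B (TnSet k p (n + 1)) ⊆ perpSet B (TnSet k p n)) ∧
    -- each `T_n^⊥(A)` is an ideal of the center `Z(A)`
    (∀ n : ℕ, perpSet B (TnSet k p n) ⊆ Set.center A) ∧
    (∀ n : ℕ, ∀ z ∈ Set.center A, ∀ x ∈ perpSet B (TnSet k p n), z * x ∈ perpSet B (TnSet k p n)) ∧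
    (∀ n : ℕ, ∀ x ∈ perpSet B (TnSet k p n), ∀ y ∈ perpSet B (TnSet k p n),
      x + y ∈ perpSet B (TnSet k p n)) ∧
    (∀ n : ℕ, ∀ c : k, ∀ x ∈ perpSet B (TnSet k p n), c • x ∈ perpSet B (TnSet k p n)) :=
  kulshammer_chain_general (hp := hp) B hnondeg hsymm hassoc
end

section
/- Let $k$ be algebraically closed of characteristic $2$, $m\ge 1$, $G=C_{2^m}$, and $\overline{Z}(kG)=Z(kG)/T_1^\perp(kG)$. Then $\dim_k \overline{Z}(kG)=2^{m-1}$, $\dim_k J(\overline{Z}(kG))=2^{m-1}-1$, $\dim_k J^2(\overline{Z}(kG))=\max(0,2^{m-1}-2)$, and $\dim_k J(\overline{Z}(kG))/J^2(\overline{Z}(kG))$ equals $1$ if $m>1$ and $0$ if $m=1$. -/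
set_option synthInstance.maxHeartbeats 1000000
set_option maxHeartbeats 2000000

/-- The sum `∑_{y : y² = c} y` in the group algebra of a finite abelian group: the element
`(C^{2^{-1}})^+` for the (singleton) conjugacy class `C = {c}`. These elements span the
first Külshammer ideal `T_1^⊥(kG)` in characteristic `2`. -/
noncomputable def sqrtClassSum (k : Type*) {G : Type*} [Field k] [CommGroup G] [Fintype G]
    [DecidableEq G] (c : G) : MonoidAlgebra k G :=
  ∑ y ∈ Finset.univ.filter (fun y : G => y * y = c), MonoidAlgebra.single y (1 : k)

/-- The first Külshammer ideal of `kG` (for `G` a finite abelian group, `char k = 2`),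
as an ideal of `Z(kG) = kG`. -/
noncomputable def kulshammerIdeal (k : Type*) (G : Type*) [Field k] [CommGroup G] [Fintype G]
    [DecidableEq G] : Ideal (MonoidAlgebra k G) :=
  Ideal.span (Set.range (sqrtClassSum k (G := G)))

/-- The quotient ring `Z̄(kG) = Z(kG)/T_1^⊥(kG)`. -/
abbrev ZbarCyclic (k : Type*) (G : Type*) [Field k] [CommGroup G] [Fintype G] [DecidableEq G] :
    Type _ :=
  MonoidAlgebra k G ⧸ kulshammerIdeal k G

/-- The Jacobson radical `J(Z̄(kG))`. -/
noncomputable def JradCyclic (k : Type*) (G : Type*) [Field k] [CommGroup G] [Fintype G]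
    [DecidableEq G] : Ideal (ZbarCyclic k G) :=
  (⊥ : Ideal (ZbarCyclic k G)).jacobson

/-!
Write `n = 2^(m-1)` and `z = g^n`, the unique involution of `G`. In characteristic `2`,
`(1 + X)^(2^s) = 1 + X^(2^s)`, so `g ↦ 1 + X` defines an algebra map `kG → k[X]/(X^n)`
sending `z` to `1`; as the square roots of any `c` come in pairs `{y, yz}`, it kills every
`sqrtClassSum` and factors through `Z̄`. Conversely `X ↦ g + 1` is well defined on `Z̄`, because
`(g + 1)^n = z + 1 = sqrtClassSum 1`. The two maps are mutually inverse, so `Z̄ ≅ k[X]/(X^n)`,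
a local algebra with radical `(X)` and `J² = (X²)`, of dimensions `n - 1` and `n - 2`.
-/

open Polynomial Module

section CharTwo

variable {A : Type*} [Semiring A]

theorem add_self_eq_zero_of_charP_two (k : Type*) [CommRing k] [CharP k 2] [Algebra k A]
    (x : A) : x + x = 0 := by
  rw [← two_smul k x, CharTwo.two_eq_zero, zero_smul]

theorem add_one_pow_two_pow (k : Type*) [CommRing k] [CharP k 2] [Algebra k A] (x : A) (s : ℕ) :
    (x + 1) ^ 2 ^ s = x ^ 2 ^ s + 1 := by
  simpa using congrArg (aeval x) (add_pow_char_pow (X : k[X]) 1 (p := 2) (n := s))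

end CharTwo

theorem Ideal.jacobson_bot_eq_span_singleton {R : Type*} [CommRing R] {x : R}
    (hx : IsNilpotent x) (hmax : (Ideal.span {x}).IsMaximal) :
    (⊥ : Ideal R).jacobson = Ideal.span {x} := by
  refine le_antisymm (sInf_le ⟨bot_le, hmax⟩) ?_
  obtain ⟨N, hN⟩ := hx
  rw [Ideal.span_le, Set.singleton_subset_iff, SetLike.mem_coe, Ideal.jacobson, Ideal.mem_sInf]
  rintro J ⟨-, hJ⟩
  exact hJ.isPrime.mem_of_pow_mem N (hN ▸ J.zero_mem)

theorem Ideal.finrank_restrictScalars_map_algEquiv {R A B : Type*} [CommRing R] [CommRing A]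
    [CommRing B] [Algebra R A] [Algebra R B] (e : A ≃ₐ[R] B) (I : Ideal A) :
    finrank R ((I.map e).restrictScalars R) = finrank R (I.restrictScalars R) := by
  have : (I.map e).restrictScalars R =
      (I.restrictScalars R).map (e.toLinearEquiv : A →ₗ[R] B) := by
    ext y
    simp only [Submodule.restrictScalars_mem, Ideal.mem_map_of_equiv, Submodule.mem_map]
    rfl
  rw [this, LinearEquiv.finrank_map_eq]

theorem Submodule.finrank_quotient_comap_subtype {K V : Type*} [DivisionRing K] [AddCommGroup V]
    [Module K V] {N M : Submodule K V} [FiniteDimensional K M] (h : N ≤ M) :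
    finrank K (M ⧸ N.comap M.subtype) = finrank K M - finrank K N := by
  have := Submodule.finrank_quotient_add_finrank (N.comap M.subtype)
  rw [(comapSubtypeEquivOfLe h).finrank_eq] at this
  omega

namespace AdjoinRoot

variable {k : Type*} [Field k] {n : ℕ}

variable (k n) in
theorem finrank_X_pow : finrank k (AdjoinRoot (X ^ n : k[X])) = n := by
  rw [(powerBasis (pow_ne_zero n X_ne_zero)).finrank, powerBasis_dim, natDegree_X_pow]

instance finite_X_pow : Module.Finite k (AdjoinRoot (X ^ n : k[X])) :=
  (powerBasis (pow_ne_zero n X_ne_zero)).finite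

theorem root_X_pow_pow_eq_zero {t : ℕ} (h : n ≤ t) : root (X ^ n : k[X]) ^ t = 0 := by
  rw [← mk_X, ← map_pow, mk_eq_zero]
  exact pow_dvd_pow X h

theorem root_X_pow_add_one_pow_two_pow [CharP k 2] {s : ℕ} (h : n ≤ 2 ^ s) :
    (root (X ^ n : k[X]) + 1) ^ 2 ^ s = 1 := by
  rw [add_one_pow_two_pow k, root_X_pow_pow_eq_zero h, zero_add]

theorem isMaximal_span_root_X_pow (hn : n ≠ 0) :
    (Ideal.span {root (X ^ n : k[X])}).IsMaximal := by
  have hX : (Ideal.span {(X : k[X])}).IsMaximal :=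
    PrincipalIdealRing.isMaximal_of_irreducible irreducible_X
  have hker : RingHom.ker (mk (X ^ n : k[X])) ≤ Ideal.span {X} := by
    rw [show RingHom.ker (mk (X ^ n : k[X])) = Ideal.span {X ^ n} from Ideal.mk_ker,
      Ideal.span_singleton_le_span_singleton]
    exact dvd_pow_self X hn
  simpa [Ideal.map_span] using hX.map_of_surjective_of_ker_le mk_surjective hker

theorem jacobson_bot_X_pow (hn : n ≠ 0) :
    (⊥ : Ideal (AdjoinRoot (X ^ n : k[X]))).jacobson = Ideal.span {root (X ^ n)} :=
  Ideal.jacobson_bot_eq_span_singleton ⟨n, root_X_pow_pow_eq_zero le_rfl⟩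
    (isMaximal_span_root_X_pow hn)

theorem restrictScalars_span_root_X_pow_pow (t : ℕ) :
    (Ideal.span {root (X ^ n : k[X]) ^ t}).restrictScalars k =
      Submodule.span k (Set.range fun i : Fin (n - t) => root (X ^ n : k[X]) ^ (t + i)) := by
  set b := powerBasis (pow_ne_zero n (X_ne_zero (R := k)))
  have hb : ∀ i, b.basis i = root (X ^ n) ^ (i : ℕ) := fun i => by
    rw [b.basis_eq_pow]; rfl
  have hdim : b.dim = n := by rw [powerBasis_dim, natDegree_X_pow]
  apply le_antisymm
  · intro x hx
    obtain ⟨y, rfl⟩ := Ideal.mem_span_singleton'.mp hx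
    rw [← b.basis.sum_repr y, Finset.sum_mul]
    refine Submodule.sum_mem _ fun i _ => ?_
    rw [smul_mul_assoc, hb, ← pow_add, add_comm]
    by_cases hi : t + i < n
    · exact Submodule.smul_mem _ _ (Submodule.subset_span ⟨⟨i, by omega⟩, rfl⟩)
    · rw [root_X_pow_pow_eq_zero (by omega), smul_zero]
      exact Submodule.zero_mem _
  · rw [Submodule.span_le]
    rintro _ ⟨i, rfl⟩
    exact Ideal.mem_span_singleton.mpr (pow_dvd_pow _ (Nat.le_add_right _ _))

theorem finrank_span_root_X_pow_pow (t : ℕ) :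
    finrank k ((Ideal.span {root (X ^ n : k[X]) ^ t}).restrictScalars k) = n - t := by
  set b := powerBasis (pow_ne_zero n (X_ne_zero (R := k)))
  have hdim : b.dim = n := by rw [powerBasis_dim, natDegree_X_pow]
  let e : Fin (n - t) → Fin b.dim := fun i => ⟨t + i, by omega⟩
  have he : Function.Injective e := fun i j h => Fin.ext (by simpa [e] using h)
  have hli : LinearIndependent k fun i : Fin (n - t) => root (X ^ n : k[X]) ^ (t + i) := by
    have hcomp : (fun i : Fin (n - t) => root (X ^ n : k[X]) ^ (t + i)) = b.basis ∘ e :=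
      funext fun i => by rw [Function.comp_apply, b.basis_eq_pow]; rfl
    exact hcomp ▸ b.basis.linearIndependent.comp e he
  rw [restrictScalars_span_root_X_pow_pow, finrank_span_eq_card hli, Fintype.card_fin]

end AdjoinRoot

section OrderTwoPow

variable {G : Type*} [Monoid G] {g : G} {m : ℕ}

theorem pow_two_pow_pred_ne_one (hm : 1 ≤ m) (hord : orderOf g = 2 ^ m) :
    g ^ 2 ^ (m - 1) ≠ 1 :=
  pow_ne_one_of_lt_orderOf (by positivity) (hord ▸ Nat.pow_lt_pow_right one_lt_two (by omega))

theorem pow_two_pow_pred_mul_self (hm : 1 ≤ m) (hord : orderOf g = 2 ^ m) :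
    g ^ 2 ^ (m - 1) * g ^ 2 ^ (m - 1) = 1 := by
  rw [← pow_add, ← two_mul, ← pow_succ', Nat.sub_add_cancel hm, ← hord, pow_orderOf_eq_one]

end OrderTwoPow

section Kulshammer

open MonoidAlgebra

variable {k : Type*} [Field k] {G : Type*} [CommGroup G] [Fintype G] [DecidableEq G]

theorem filter_mul_self_eq_one_of_isCyclic [IsCyclic G] {z : G} (hz : z ≠ 1) (hzz : z * z = 1) :
    Finset.univ.filter (fun y : G => y * y = 1) = {1, z} := by
  symm
  refine Finset.eq_of_subset_of_card_le (by simp [Finset.insert_subset_iff, hzz]) ?_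
  simpa [← sq, Finset.card_pair hz.symm] using IsCyclic.card_pow_eq_one_le (α := G) two_pos

theorem sqrtClassSum_one_of_isCyclic [IsCyclic G] {z : G} (hz : z ≠ 1) (hzz : z * z = 1) :
    sqrtClassSum k (1 : G) = single 1 1 + single z 1 := by
  rw [sqrtClassSum, filter_mul_self_eq_one_of_isCyclic hz hzz, Finset.sum_pair hz.symm]

theorem single_pow_two_pow_pred_add_one_mem_kulshammerIdeal {m : ℕ} {g : G}
    (hg : ∀ x, x ∈ Subgroup.zpowers g) (hord : orderOf g = 2 ^ m) (hm : 1 ≤ m) :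
    single (g ^ 2 ^ (m - 1)) (1 : k) + 1 ∈ kulshammerIdeal k G := by
  have : IsCyclic G := ⟨g, fun x => Subgroup.mem_zpowers_iff.mp (hg x)⟩
  rw [one_def, add_comm, ← sqrtClassSum_one_of_isCyclic (pow_two_pow_pred_ne_one hm hord)
    (pow_two_pow_pred_mul_self hm hord)]
  exact Ideal.subset_span ⟨1, rfl⟩

theorem lift_sqrtClassSum_eq_zero [CharP k 2] {A : Type*} [Semiring A] [Algebra k A]
    (f : G →* A) {z : G} (hz : z ≠ 1) (hzz : z * z = 1) (hfz : f z = 1) (c : G) :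
    lift k A G f (sqrtClassSum k c) = 0 := by
  rw [sqrtClassSum, map_sum]
  refine Finset.sum_involution (fun y _ => y * z) (fun y _ => ?_) (fun y _ _ h => ?_)
    (fun y hy => ?_) (fun y _ => by rw [mul_assoc, hzz, mul_one])
  · rw [lift_single, lift_single, map_mul, hfz, mul_one, add_self_eq_zero_of_charP_two k]
  · exact hz (mul_eq_left.mp h)
  · simp only [Finset.mem_filter, Finset.mem_univ, true_and] at hy ⊢
    rw [mul_mul_mul_comm, hy, hzz, mul_one]

theorem kulshammerIdeal_le_ker_lift [CharP k 2] {A : Type*} [Semiring A] [Algebra k A]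
    (f : G →* A) {z : G} (hz : z ≠ 1) (hzz : z * z = 1) (hfz : f z = 1) :
    kulshammerIdeal k G ≤ RingHom.ker (lift k A G f) := by
  rw [kulshammerIdeal, Ideal.span_le]
  rintro _ ⟨c, rfl⟩
  exact lift_sqrtClassSum_eq_zero f hz hzz hfz c

end Kulshammer

section CyclicTwoGroup

open MonoidAlgebra Subgroup AdjoinRoot

variable {k : Type*} [Field k] [CharP k 2] {G : Type*} [CommGroup G] {m : ℕ} {g : G}

noncomputable def cyclicToTruncated (hg : ∀ x, x ∈ zpowers g) (hord : orderOf g = 2 ^ m) :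
    G →* AdjoinRoot (X ^ 2 ^ (m - 1) : k[X]) :=
  have hpow : (root (X ^ 2 ^ (m - 1) : k[X]) + 1) ^ 2 ^ m = 1 :=
    root_X_pow_add_one_pow_two_pow (Nat.pow_le_pow_right two_pos (Nat.sub_le m 1))
  (Units.coeHom _).comp <| monoidHomOfForallMemZpowers hg
    (g' := Units.ofPowEqOne _ _ hpow (by positivity))
    (by rw [hord]; exact orderOf_dvd_of_pow_eq_one (Units.pow_ofPowEqOne _ _))

theorem cyclicToTruncated_pow (hg : ∀ x, x ∈ zpowers g) (hord : orderOf g = 2 ^ m) (j : ℕ) :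
    cyclicToTruncated (k := k) hg hord (g ^ j) = (root _ + 1) ^ j := by
  simp [cyclicToTruncated]

theorem cyclicToTruncated_gen (hg : ∀ x, x ∈ zpowers g) (hord : orderOf g = 2 ^ m) :
    cyclicToTruncated (k := k) hg hord g = root _ + 1 := by
  simpa using cyclicToTruncated_pow hg hord 1

theorem cyclicToTruncated_pow_two_pow_pred (hg : ∀ x, x ∈ zpowers g)
    (hord : orderOf g = 2 ^ m) :
    cyclicToTruncated (k := k) hg hord (g ^ 2 ^ (m - 1)) = 1 := by
  rw [cyclicToTruncated_pow]
  exact root_X_pow_add_one_pow_two_pow le_rfl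

variable [Fintype G] [DecidableEq G]

noncomputable def zbarToTruncated (hg : ∀ x, x ∈ zpowers g) (hord : orderOf g = 2 ^ m)
    (hm : 1 ≤ m) :
    ZbarCyclic k G →ₐ[k] AdjoinRoot (X ^ 2 ^ (m - 1) : k[X]) :=
  Ideal.Quotient.liftₐ _ (lift k _ G (cyclicToTruncated hg hord)) fun _ ha =>
    RingHom.mem_ker.mp <| kulshammerIdeal_le_ker_lift _ (pow_two_pow_pred_ne_one hm hord)
      (pow_two_pow_pred_mul_self hm hord) (cyclicToTruncated_pow_two_pow_pred hg hord) ha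

noncomputable def truncatedToZbar (hg : ∀ x, x ∈ zpowers g) (hord : orderOf g = 2 ^ m)
    (hm : 1 ≤ m) :
    AdjoinRoot (X ^ 2 ^ (m - 1) : k[X]) →ₐ[k] ZbarCyclic k G :=
  liftAlgHom _ (Algebra.ofId k _) (Ideal.Quotient.mk _ (single g 1) + 1) <| by
    rw [eval₂_X_pow, add_one_pow_two_pow k, ← map_pow, single_pow, one_pow,
      ← map_one (Ideal.Quotient.mk _), ← map_add, Ideal.Quotient.eq_zero_iff_mem]
    exact single_pow_two_pow_pred_add_one_mem_kulshammerIdeal hg hord hm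

theorem zbarToTruncated_mk_single (hg : ∀ x, x ∈ zpowers g) (hord : orderOf g = 2 ^ m)
    (hm : 1 ≤ m) (x : G) :
    zbarToTruncated (k := k) hg hord hm (Ideal.Quotient.mk _ (single x 1)) =
      cyclicToTruncated hg hord x := by
  change lift k _ G _ (single x 1) = _
  rw [lift_single, one_smul]

theorem truncatedToZbar_root (hg : ∀ x, x ∈ zpowers g) (hord : orderOf g = 2 ^ m)
    (hm : 1 ≤ m) :
    truncatedToZbar (k := k) hg hord hm (root _) = Ideal.Quotient.mk _ (single g 1) + 1 :=
  liftAlgHom_root _ _ _ _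

noncomputable def zbarCyclicEquiv (hg : ∀ x, x ∈ zpowers g) (hord : orderOf g = 2 ^ m)
    (hm : 1 ≤ m) :
    ZbarCyclic k G ≃ₐ[k] AdjoinRoot (X ^ 2 ^ (m - 1) : k[X]) :=
  AlgEquiv.ofAlgHom (zbarToTruncated hg hord hm) (truncatedToZbar hg hord hm)
    (algHom_ext <| by
      rw [AlgHom.comp_apply, truncatedToZbar_root, map_add, map_one, zbarToTruncated_mk_single,
        cyclicToTruncated_gen, add_assoc, add_self_eq_zero_of_charP_two k, add_zero,
        AlgHom.id_apply])
    (Ideal.Quotient.algHom_ext _ <| MonoidAlgebra.algHom_ext (fun x => by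
      obtain ⟨j, rfl⟩ := mem_powers_iff_mem_zpowers.mpr (hg x)
      rw [AlgHom.comp_apply, AlgHom.comp_apply, Ideal.Quotient.mkₐ_eq_mk,
        zbarToTruncated_mk_single, cyclicToTruncated_pow, map_pow, map_add, map_one,
        truncatedToZbar_root, add_assoc, add_self_eq_zero_of_charP_two k, add_zero, ← map_pow,
        single_pow, one_pow]
      rfl) (by ext))

end CyclicTwoGroup

theorem kulshammer_quotient_cyclic_two_group_general
    {k : Type*} [Field k] [CharP k 2]
    {G : Type*} [CommGroup G] [Fintype G] [DecidableEq G] {m : ℕ} (hm : 1 ≤ m)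
    (g : G) (hg : ∀ x : G, x ∈ Subgroup.zpowers g) (hcard : Nat.card G = 2 ^ m) :
    Module.finrank k (ZbarCyclic k G) = 2 ^ (m - 1) ∧
    Module.finrank k (Submodule.restrictScalars k (JradCyclic k G)) = 2 ^ (m - 1) - 1 ∧
    Module.finrank k (Submodule.restrictScalars k (JradCyclic k G * JradCyclic k G))
      = 2 ^ (m - 1) - 2 ∧
    Module.finrank k
      ((Submodule.restrictScalars k (JradCyclic k G)) ⧸
        Submodule.comap (Submodule.restrictScalars k (JradCyclic k G)).subtype
          (Submodule.restrictScalars k (JradCyclic k G * JradCyclic k G)))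
      = if 1 < m then 1 else 0 := by
  set e := zbarCyclicEquiv (k := k) hg (hcard ▸ orderOf_eq_card_of_forall_mem_zpowers hg) hm
  have : FiniteDimensional k (ZbarCyclic k G) := e.symm.toLinearEquiv.finiteDimensional
  have hJ : (JradCyclic k G).map e = Ideal.span {AdjoinRoot.root _} := by
    have he : Function.Bijective (e : ZbarCyclic k G →+* AdjoinRoot (X ^ 2 ^ (m - 1) : k[X])) :=
      e.bijective
    rw [JradCyclic, ← Ideal.map_coe, Ideal.map_jacobson_of_bijective he, Ideal.map_bot,
      AdjoinRoot.jacobson_bot_X_pow (by positivity)]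
  have hJJ : (JradCyclic k G * JradCyclic k G).map e = Ideal.span {AdjoinRoot.root _ ^ 2} := by
    rw [Ideal.map_mul, hJ, Ideal.span_singleton_mul_span_singleton, sq]
  have hdimJ : finrank k ((JradCyclic k G).restrictScalars k) = 2 ^ (m - 1) - 1 := by
    rw [← Ideal.finrank_restrictScalars_map_algEquiv e, hJ, ← pow_one (AdjoinRoot.root _),
      AdjoinRoot.finrank_span_root_X_pow_pow]
  have hdimJJ :
      finrank k ((JradCyclic k G * JradCyclic k G).restrictScalars k) = 2 ^ (m - 1) - 2 := by
    rw [← Ideal.finrank_restrictScalars_map_algEquiv e, hJJ,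
      AdjoinRoot.finrank_span_root_X_pow_pow]
  refine ⟨e.toLinearEquiv.finrank_eq.trans (AdjoinRoot.finrank_X_pow k _), hdimJ, hdimJJ, ?_⟩
  rw [Submodule.finrank_quotient_comap_subtype
    (Submodule.restrictScalars_mono k Ideal.mul_le_left), hdimJ, hdimJJ]
  split_ifs with h
  · have : 2 ≤ 2 ^ (m - 1) := Nat.le_self_pow (by omega) 2
    omega
  · obtain rfl : m = 1 := by omega
    rfl

/-- For `G = C_{2^m}` cyclic of order `2^m` (`m ≥ 1`) over an algebraically closed field `k`
of characteristic `2`, the quotient `Z̄ = Z(kG)/T_1^⊥(kG)` has dimension `2^{m-1}`, its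
Jacobson radical `J(Z̄)` has dimension `2^{m-1} - 1`, `J²(Z̄)` has dimension
`max(0, 2^{m-1} - 2)`, and `dim J(Z̄)/J²(Z̄)` is `1` if `m > 1` and `0` if `m = 1`. -/
theorem kulshammer_quotient_cyclic_two_group
    {k : Type*} [Field k] [IsAlgClosed k] [CharP k 2]
    {G : Type*} [CommGroup G] [Fintype G] [DecidableEq G] {m : ℕ} (hm : 1 ≤ m)
    (g : G) (hg : ∀ x : G, x ∈ Subgroup.zpowers g) (hcard : Nat.card G = 2 ^ m) :
    Module.finrank k (ZbarCyclic k G) = 2 ^ (m - 1) ∧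
    Module.finrank k (Submodule.restrictScalars k (JradCyclic k G)) = 2 ^ (m - 1) - 1 ∧
    Module.finrank k (Submodule.restrictScalars k (JradCyclic k G * JradCyclic k G))
      = 2 ^ (m - 1) - 2 ∧
    Module.finrank k
      ((Submodule.restrictScalars k (JradCyclic k G)) ⧸
        Submodule.comap (Submodule.restrictScalars k (JradCyclic k G)).subtype
          (Submodule.restrictScalars k (JradCyclic k G * JradCyclic k G)))
      = if 1 < m then 1 else 0 :=
  kulshammer_quotient_cyclic_two_group_general hm g hg hcard
end

section
/- Let $q\equiv 1\pmod 8$ be a prime power with $q-1=2^{n-1}q'$, $q'$ odd. For each $1\le s\le \frac{q'-1}{2}$, the set $\mathcal{I}_s=\{i : 1\le i\le 2^{n-3}q'-1,\ i\equiv \pm s\pmod{q'}\}$ contains exactly one element divisible by $2^{n-2}$. -/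
/-!
Write a multiple of `2^{n-2} = 2·2^{n-3}` as `i = 2^{n-2} k`. The bound `1 ≤ i ≤ 2^{n-3} q' - 1`
becomes `1 ≤ k ≤ (q' - 1)/2` because `q'` is odd, and since `2^{n-2}` is a unit mod `q'`,
`i ≡ ±s` becomes `k ≡ ±x` with `x = 2^{-(n-2)} s ≢ 0`. Exactly one `k` in that range satisfies
this, namely the absolute value of the least absolute residue of `x`. The condition `8 ∣ q - 1`
guarantees `n ≥ 4`, so that the truncated exponents `n - 2` and `n - 3` really differ by one.
-/

/-- The index set `𝓘_s = {i : 1 ≤ i ≤ 2^{n-3} q' - 1, i ≡ ± s (mod q')}`. -/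
def indexSet (n q' s : ℕ) : Finset ℕ :=
  (Finset.Icc 1 (2 ^ (n - 3) * q' - 1)).filter
    (fun i => (q' : ℤ) ∣ ((i : ℤ) - (s : ℤ)) ∨ (q' : ℤ) ∣ ((i : ℤ) + (s : ℤ)))

theorem ZMod.natCast_eq_or_eq_neg_iff {N k : ℕ} (x : ZMod N) (hk : k ≤ N / 2) :
    ((k : ZMod N) = x ∨ (k : ZMod N) = -x) ↔ k = x.valMinAbs.natAbs := by
  rw [← ZMod.natAbs_valMinAbs_eq_natAbs_valMinAbs, ZMod.valMinAbs_natCast_of_le_half hk,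
    Int.natAbs_natCast]

theorem Units.mul_eq_or_mul_eq_neg_iff {R : Type*} [CommRing R] (c : Rˣ) (x s : R) :
    (c * x = s ∨ c * x = -s) ↔ (x = ↑c⁻¹ * s ∨ x = -(↑c⁻¹ * s)) := by
  simp only [← mul_neg, Units.eq_inv_mul_iff_mul_eq]

theorem Nat.two_mul_mul_mem_Icc_iff {P N k : ℕ} (hP : 0 < P) (hN : Odd N) :
    2 * P * k ∈ Finset.Icc 1 (P * N - 1) ↔ 1 ≤ k ∧ k ≤ N / 2 := by
  obtain ⟨j, rfl⟩ := hN
  have : 2 * P * k ≤ P * (2 * j + 1) - 1 ↔ k ≤ j := by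
    rw [Nat.le_sub_one_iff_lt (by positivity), mul_right_comm, mul_comm P, Nat.mul_lt_mul_right hP]
    omega
  rw [Finset.mem_Icc, this, Nat.one_le_iff_ne_zero, Nat.one_le_iff_ne_zero, Nat.mul_ne_zero_iff]
  omega

theorem three_le_of_mod_eight_eq_one {q a q' : ℕ} (hq8 : q % 8 = 1) (hfac : q - 1 = 2 ^ a * q')
    (hq' : Odd q') : 3 ≤ a := by
  have h8 : 2 ^ 3 ∣ 2 ^ a * q' := by rw [← hfac]; omega
  exact (Nat.pow_dvd_pow_iff_le_right (by norm_num)).mp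
    (((Nat.coprime_two_left.mpr hq').pow_left 3).dvd_of_dvd_mul_right h8)

theorem mem_indexSet {n q' s i : ℕ} : i ∈ indexSet n q' s ↔
    i ∈ Finset.Icc 1 (2 ^ (n - 3) * q' - 1) ∧ ((i : ZMod q') = s ∨ (i : ZMod q') = -s) := by
  rw [indexSet, Finset.mem_filter, ← sub_neg_eq_add, ← ZMod.intCast_eq_intCast_iff_dvd_sub,
    ← ZMod.intCast_eq_intCast_iff_dvd_sub]
  push_cast
  simp only [eq_comm]

theorem existsUnique_mem_Icc_and_two_mul_dvd {N P : ℕ} (hcop : Nat.Coprime (2 * P) N) (hP : 0 < P)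
    {s : ZMod N} (hs : s ≠ 0) :
    ∃! i : ℕ, (i ∈ Finset.Icc 1 (P * N - 1) ∧ ((i : ZMod N) = s ∨ (i : ZMod N) = -s)) ∧
      2 * P ∣ i := by
  have hN : Odd N := Nat.coprime_two_left.mp (Nat.Coprime.coprime_mul_right hcop)
  have : NeZero N := ⟨hN.pos.ne'⟩
  set c := ZMod.unitOfCoprime (2 * P) hcop
  set x : ZMod N := ↑c⁻¹ * s
  have hx : x ≠ 0 := by rwa [Ne, Units.mul_right_eq_zero]
  have hmem_iff : ∀ k, (2 * P * k ∈ Finset.Icc 1 (P * N - 1) ∧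
      (((2 * P * k : ℕ) : ZMod N) = s ∨ ((2 * P * k : ℕ) : ZMod N) = -s)) ↔
      k = x.valMinAbs.natAbs := by
    intro k
    have hcast : ((2 * P * k : ℕ) : ZMod N) = c * k := by
      rw [ZMod.coe_unitOfCoprime, Nat.cast_mul]
    rw [hcast, Units.mul_eq_or_mul_eq_neg_iff, Nat.two_mul_mul_mem_Icc_iff hP hN]
    constructor
    · rintro ⟨⟨-, hk⟩, hkx⟩
      exact (ZMod.natCast_eq_or_eq_neg_iff x hk).mp hkx
    · rintro rfl
      refine ⟨⟨?_, ZMod.natAbs_valMinAbs_le x⟩, ?_⟩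
      · rwa [Nat.one_le_iff_ne_zero, Int.natAbs_ne_zero, Ne, ZMod.valMinAbs_eq_zero]
      · exact (ZMod.natCast_eq_or_eq_neg_iff x (ZMod.natAbs_valMinAbs_le x)).mpr rfl
  refine ⟨2 * P * x.valMinAbs.natAbs, ⟨(hmem_iff _).mpr rfl, dvd_mul_right _ _⟩, ?_⟩
  rintro _ ⟨hi, k, rfl⟩
  rw [(hmem_iff k).mp hi]

theorem indexSet_unique_divisible_general
    {q n q' : ℕ} (hq8 : q % 8 = 1)
    (hfac : q - 1 = 2 ^ (n - 1) * q') (hq' : Odd q')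
    (s : ℕ) (hs1 : 1 ≤ s) (hs2 : s ≤ (q' - 1) / 2) :
    ∃! i : ℕ, i ∈ indexSet n q' s ∧ 2 ^ (n - 2) ∣ i := by
  have hn : 3 ≤ n - 1 := three_le_of_mod_eight_eq_one hq8 hfac hq'
  have hpow : 2 ^ (n - 2) = 2 * 2 ^ (n - 3) := by rw [← pow_succ']; congr 1; omega
  have hcop : Nat.Coprime (2 * 2 ^ (n - 3)) q' := by
    rw [← hpow]; exact (Nat.coprime_two_left.mpr hq').pow_left _
  have hs : (s : ZMod q') ≠ 0 := by
    rw [Ne, ZMod.natCast_eq_zero_iff]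
    exact Nat.not_dvd_of_pos_of_lt hs1 (by have := hq'.pos; omega)
  simp only [mem_indexSet, hpow]
  exact existsUnique_mem_Icc_and_two_mul_dvd hcop (by positivity) hs

/-- For a prime power `q ≡ 1 (mod 8)` with `q - 1 = 2^{n-1} q'`, `q'` odd, and each
`1 ≤ s ≤ (q'-1)/2`, the set `𝓘_s` contains exactly one element divisible by `2^{n-2}`. -/
theorem indexSet_unique_divisible
    {q n q' : ℕ} (hpp : IsPrimePow q) (hq8 : q % 8 = 1)
    (hfac : q - 1 = 2 ^ (n - 1) * q') (hq' : Odd q')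
    (s : ℕ) (hs1 : 1 ≤ s) (hs2 : s ≤ (q' - 1) / 2) :
    ∃! i : ℕ, i ∈ indexSet n q' s ∧ 2 ^ (n - 2) ∣ i :=
  indexSet_unique_divisible_general hq8 hfac hq' s hs1 hs2
end
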